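/- arXiv:1504.02643 — 4 statements merged into one kernel-verified Lean document; each statement's English description precedes it below -/
import Mathlib

section
/- The three-qubit GHZ state |GHZ⟩ = (|000⟩ + |111⟩)/√2 and the W state |W⟩ = (|100⟩ + |010⟩ + |001⟩)/√3 are not SLOCC equivalent: there exist no invertible 2×2 complex matrices A, B, C such that (A ⊗ B ⊗ C)|GHZ⟩ is proportional to |W⟩. -/
open Matrix

/-- The matrix `M 0 ⊗ M 1 ⊗ ⋯ ⊗ M (n-1)` acting on `n` qubits,
indexed by bit strings `Fin n → Fin 2`. -/
def localMat {n : ℕ} (M : Fin n → Matrix (Fin 2) (Fin 2) ℂ) :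
    Matrix (Fin n → Fin 2) (Fin n → Fin 2) ℂ :=
  Matrix.of fun f g => ∏ i, M i (f i) (g i)

/-- The three-qubit GHZ state `(|000⟩ + |111⟩)/√2`. -/
noncomputable def GHZ3 : (Fin 3 → Fin 2) → ℂ := fun f =>
  if (∀ i, f i = 0) ∨ (∀ i, f i = 1) then ((Real.sqrt 2)⁻¹ : ℂ) else 0

/-- The three-qubit W state `(|100⟩ + |010⟩ + |001⟩)/√3`. -/
noncomputable def W3 : (Fin 3 → Fin 2) → ℂ := fun f =>
  if (∑ i, (f i : ℕ)) = 1 then ((Real.sqrt 3)⁻¹ : ℂ) else 0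

/-- GHZ3 as combination of two point masses. -/
lemma GHZ3_eq : GHZ3 = fun g =>
    ((Real.sqrt 2)⁻¹ : ℂ) *
      ((if g = (fun _ => 0) then 1 else 0) + (if g = (fun _ => 1) then 1 else 0)) := by
  funext g
  have h0 : (∀ i, g i = 0) ↔ g = (fun _ => 0) := by simp [funext_iff]
  have h1 : (∀ i, g i = 1) ↔ g = (fun _ => 1) := by simp [funext_iff]
  have hne : g = (fun _ => 0) → g = (fun _ => 1) → False := by
    intro ha hb; have := congrFun (ha ▸ hb) 0; simp at this
  simp only [GHZ3, h0, h1]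
  split_ifs with h h2 h3 h4 h5 <;> simp_all

lemma mulVec_GHZ (A B C : Matrix (Fin 2) (Fin 2) ℂ) (f : Fin 3 → Fin 2) :
    (localMat ![A, B, C] *ᵥ GHZ3) f =
      ((Real.sqrt 2)⁻¹ : ℂ) *
        (A (f 0) 0 * B (f 1) 0 * C (f 2) 0 + A (f 0) 1 * B (f 1) 1 * C (f 2) 1) := by
  rw [GHZ3_eq]
  simp only [Matrix.mulVec, dotProduct, localMat, Matrix.of_apply, mul_add, mul_ite,
    mul_one, mul_zero, Finset.sum_add_distrib, Finset.sum_ite_eq', Finset.mem_univ, if_true,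
    Fin.prod_univ_three]
  simp [Fin.prod_univ_three]
  ring

/-- Cayley's hyperdeterminant of a three-qubit state. -/
noncomputable def hdet (ψ : (Fin 3 → Fin 2) → ℂ) : ℂ :=
  (ψ ![0,0,0])^2 * (ψ ![1,1,1])^2 + (ψ ![0,0,1])^2 * (ψ ![1,1,0])^2
  + (ψ ![0,1,0])^2 * (ψ ![1,0,1])^2 + (ψ ![1,0,0])^2 * (ψ ![0,1,1])^2
  - 2 * (ψ ![0,0,0] * ψ ![0,0,1] * ψ ![1,1,0] * ψ ![1,1,1]
       + ψ ![0,0,0] * ψ ![0,1,0] * ψ ![1,0,1] * ψ ![1,1,1]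
       + ψ ![0,0,0] * ψ ![0,1,1] * ψ ![1,0,0] * ψ ![1,1,1]
       + ψ ![0,0,1] * ψ ![0,1,0] * ψ ![1,0,1] * ψ ![1,1,0]
       + ψ ![0,0,1] * ψ ![0,1,1] * ψ ![1,1,0] * ψ ![1,0,0]
       + ψ ![0,1,0] * ψ ![0,1,1] * ψ ![1,0,1] * ψ ![1,0,0])
  + 4 * (ψ ![0,0,0] * ψ ![0,1,1] * ψ ![1,0,1] * ψ ![1,1,0]
       + ψ ![0,0,1] * ψ ![0,1,0] * ψ ![1,0,0] * ψ ![1,1,1])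

lemma hdet_GHZ (A B C : Matrix (Fin 2) (Fin 2) ℂ) :
    hdet (localMat ![A, B, C] *ᵥ GHZ3) =
      ((Real.sqrt 2)⁻¹ : ℂ)^4 * (A.det * B.det * C.det)^2 := by
  simp only [hdet, mulVec_GHZ, Matrix.cons_val_zero, Matrix.cons_val_one, Matrix.head_cons,
    Matrix.cons_val_two, Matrix.tail_cons, Matrix.det_fin_two]
  ring

lemma hdet_smul_W (c : ℂ) : hdet (c • W3) = 0 := by
  simp only [hdet, Pi.smul_apply, smul_eq_mul, W3, Fin.sum_univ_three, Matrix.cons_val_zero,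
    Matrix.cons_val_one, Matrix.head_cons, Matrix.cons_val_two, Matrix.tail_cons]
  norm_num

/-- The GHZ state and the W state are not SLOCC equivalent: no invertible local
operator `A ⊗ B ⊗ C` maps `|GHZ⟩` to a multiple of `|W⟩`. -/
theorem GHZ_W_not_SLOCC_equivalent :
    ¬ ∃ A B C : Matrix (Fin 2) (Fin 2) ℂ,
      IsUnit A ∧ IsUnit B ∧ IsUnit C ∧
      ∃ c : ℂ, localMat ![A, B, C] *ᵥ GHZ3 = c • W3 := by
  rintro ⟨A, B, C, hA, hB, hC, c, h⟩
  have h1 := hdet_GHZ A B C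
  rw [h, hdet_smul_W] at h1
  have hs : ((Real.sqrt 2)⁻¹ : ℂ) ≠ 0 := by
    simp [Real.sqrt_eq_zero']
  have hdA : A.det ≠ 0 := (Matrix.isUnit_iff_isUnit_det A).mp hA |>.ne_zero
  have hdB : B.det ≠ 0 := (Matrix.isUnit_iff_isUnit_det B).mp hB |>.ne_zero
  have hdC : C.det ≠ 0 := (Matrix.isUnit_iff_isUnit_det C).mp hC |>.ne_zero
  exact mul_ne_zero (pow_ne_zero _ hs)
    (pow_ne_zero _ (mul_ne_zero (mul_ne_zero hdA hdB) hdC)) h1.symm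
end

section
/- The tensor rank of the three-qubit GHZ state (|000⟩+|111⟩)/√2 is 2, while the tensor rank of the W state (|100⟩+|010⟩+|001⟩)/√3 is 3. -/
open Matrix

/-- The tensor rank of a three-qubit vector: the least `r` such that the vector
is a sum of `r` product vectors `a_i ⊗ b_i ⊗ c_i`. -/
noncomputable def tensorRank3 (v : (Fin 3 → Fin 2) → ℂ) : ℕ :=
  sInf {r : ℕ | ∃ a b c : Fin r → Fin 2 → ℂ,
    v = fun f => ∑ i, a i (f 0) * b i (f 1) * c i (f 2)}

/- ### Auxiliary lemmas -/

lemma sqrt2_inv_ne_zero : ((Real.sqrt 2)⁻¹ : ℂ) ≠ 0 := by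
  have h2 : (0:ℝ) < Real.sqrt 2 := Real.sqrt_pos.mpr (by norm_num)
  exact inv_ne_zero (Complex.ofReal_ne_zero.mpr h2.ne')

lemma sqrt3_inv_ne_zero : ((Real.sqrt 3)⁻¹ : ℂ) ≠ 0 := by
  have h3 : (0:ℝ) < Real.sqrt 3 := Real.sqrt_pos.mpr (by norm_num)
  exact inv_ne_zero (Complex.ofReal_ne_zero.mpr h3.ne')

lemma ghz_mem2 : ∃ a b c : Fin 2 → Fin 2 → ℂ,
    GHZ3 = fun f => ∑ i, a i (f 0) * b i (f 1) * c i (f 2) := by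
  refine ⟨![![((Real.sqrt 2)⁻¹ : ℂ),0],![0,((Real.sqrt 2)⁻¹ : ℂ)]],
    ![![1,0],![0,1]], ![![1,0],![0,1]], ?_⟩
  funext f
  have h2 : ∀ x : Fin 2, x = 0 ∨ x = 1 := by decide
  have hf : f = ![f 0, f 1, f 2] := by funext i; fin_cases i <;> rfl
  rcases h2 (f 0) with h0|h0 <;> rcases h2 (f 1) with h1|h1 <;> rcases h2 (f 2) with h2'|h2' <;>
    rw [hf, h0, h1, h2'] <;>
    simp [GHZ3, Fin.sum_univ_two] <;>
    decide

lemma w_mem3 : ∃ a b c : Fin 3 → Fin 2 → ℂ,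
    W3 = fun f => ∑ i, a i (f 0) * b i (f 1) * c i (f 2) := by
  refine ⟨![![0,((Real.sqrt 3)⁻¹ : ℂ)],![1,0],![1,0]],
    ![![1,0],![0,((Real.sqrt 3)⁻¹ : ℂ)],![1,0]],
    ![![1,0],![1,0],![0,((Real.sqrt 3)⁻¹ : ℂ)]], ?_⟩
  funext f
  have h2 : ∀ x : Fin 2, x = 0 ∨ x = 1 := by decide
  have hf : f = ![f 0, f 1, f 2] := by funext i; fin_cases i <;> rfl
  rcases h2 (f 0) with h0|h0 <;> rcases h2 (f 1) with h1|h1 <;> rcases h2 (f 2) with h2'|h2' <;>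
    rw [hf, h0, h1, h2'] <;>
    simp [W3, Fin.sum_univ_three, Matrix.vecHead, Matrix.vecTail]

lemma ghz_not0 (a b c : Fin 0 → Fin 2 → ℂ)
    (h : GHZ3 = fun f => ∑ i, a i (f 0) * b i (f 1) * c i (f 2)) : False := by
  have h0 := congrFun h ![0,0,0]
  rw [GHZ3, if_pos (by decide)] at h0
  simp at h0

lemma ghz_not1 (a b c : Fin 1 → Fin 2 → ℂ)
    (h : GHZ3 = fun f => ∑ i, a i (f 0) * b i (f 1) * c i (f 2)) : False := by
  have E : ∀ x y z : Fin 2, GHZ3 ![x,y,z] = a 0 x * b 0 y * c 0 z := by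
    intro x y z; rw [h]; simp
  have e000 : a 0 0 * b 0 0 * c 0 0 = ((Real.sqrt 2)⁻¹ : ℂ) := by
    rw [← E]; rw [GHZ3, if_pos (by decide)]
  have e111 : a 0 1 * b 0 1 * c 0 1 = ((Real.sqrt 2)⁻¹ : ℂ) := by
    rw [← E]; rw [GHZ3, if_pos (by decide)]
  have e001 : a 0 0 * b 0 0 * c 0 1 = 0 := by
    rw [← E]; rw [GHZ3, if_neg (by decide)]
  have ha : a 0 0 * b 0 0 ≠ 0 := fun h' => sqrt2_inv_ne_zero (by rw [← e000, h', zero_mul])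
  have hc : c 0 1 ≠ 0 := fun h' => sqrt2_inv_ne_zero (by rw [← e111, h', mul_zero])
  exact mul_ne_zero ha hc e001

lemma w_not0 (a b c : Fin 0 → Fin 2 → ℂ)
    (h : W3 = fun f => ∑ i, a i (f 0) * b i (f 1) * c i (f 2)) : False := by
  have h0 := congrFun h ![1,0,0]
  rw [W3, if_pos (by decide)] at h0
  simp at h0

lemma w_not1 (a b c : Fin 1 → Fin 2 → ℂ)
    (h : W3 = fun f => ∑ i, a i (f 0) * b i (f 1) * c i (f 2)) : False := by
  have E : ∀ x y z : Fin 2, W3 ![x,y,z] = a 0 x * b 0 y * c 0 z := by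
    intro x y z; rw [h]; simp
  have e100 : a 0 1 * b 0 0 * c 0 0 = ((Real.sqrt 3)⁻¹ : ℂ) := by
    rw [← E]; rw [W3, if_pos (by decide)]
  have e000 : a 0 0 * b 0 0 * c 0 0 = 0 := by
    rw [← E]; rw [W3, if_neg (by decide)]
  have e010 : a 0 0 * b 0 1 * c 0 0 = ((Real.sqrt 3)⁻¹ : ℂ) := by
    rw [← E]; rw [W3, if_pos (by decide)]
  have hb : b 0 0 ≠ 0 := fun h' => sqrt3_inv_ne_zero (by rw [← e100, h']; ring)
  have hc : c 0 0 ≠ 0 := fun h' => sqrt3_inv_ne_zero (by rw [← e100, h']; ring)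
  have ha : a 0 0 = 0 := by
    rcases mul_eq_zero.mp e000 with h'|h'
    · rcases mul_eq_zero.mp h' with h''|h''
      · exact h''
      · exact absurd h'' hb
    · exact absurd h' hc
  exact sqrt3_inv_ne_zero (by rw [← e010, ha]; ring)

lemma w_not2 (a b c : Fin 2 → Fin 2 → ℂ)
    (h : W3 = fun f => ∑ i, a i (f 0) * b i (f 1) * c i (f 2)) : False := by
  have hs : ((Real.sqrt 3)⁻¹ : ℂ) ≠ 0 := sqrt3_inv_ne_zero
  set s : ℂ := ((Real.sqrt 3)⁻¹ : ℂ) with hsdef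
  have E : ∀ x y z : Fin 2, W3 ![x,y,z] = a 0 x * b 0 y * c 0 z + a 1 x * b 1 y * c 1 z := by
    intro x y z
    rw [h]
    simp [Fin.sum_univ_two]
  have e000 : a 0 0 * b 0 0 * c 0 0 + a 1 0 * b 1 0 * c 1 0 = 0 := by
    rw [← E]; rw [W3, if_neg (by decide)]
  have e001 : a 0 0 * b 0 0 * c 0 1 + a 1 0 * b 1 0 * c 1 1 = s := by
    rw [← E]; rw [W3, if_pos (by decide)]
  have e010 : a 0 0 * b 0 1 * c 0 0 + a 1 0 * b 1 1 * c 1 0 = s := by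
    rw [← E]; rw [W3, if_pos (by decide)]
  have e011 : a 0 0 * b 0 1 * c 0 1 + a 1 0 * b 1 1 * c 1 1 = 0 := by
    rw [← E]; rw [W3, if_neg (by decide)]
  have e100 : a 0 1 * b 0 0 * c 0 0 + a 1 1 * b 1 0 * c 1 0 = s := by
    rw [← E]; rw [W3, if_pos (by decide)]
  have e101 : a 0 1 * b 0 0 * c 0 1 + a 1 1 * b 1 0 * c 1 1 = 0 := by
    rw [← E]; rw [W3, if_neg (by decide)]
  have e110 : a 0 1 * b 0 1 * c 0 0 + a 1 1 * b 1 1 * c 1 0 = 0 := by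
    rw [← E]; rw [W3, if_neg (by decide)]
  have e111 : a 0 1 * b 0 1 * c 0 1 + a 1 1 * b 1 1 * c 1 1 = 0 := by
    rw [← E]; rw [W3, if_neg (by decide)]
  -- abbreviations
  set u1 := a 0 0; set u2 := a 1 0; set v1 := a 0 1; set v2 := a 1 1
  set B10 := b 0 0; set B11 := b 0 1; set B20 := b 1 0; set B21 := b 1 1
  set C10 := c 0 0; set C11 := c 0 1; set C20 := c 1 0; set C21 := c 1 1
  set m : ℂ := B10*C10*B21*C21 + B20*C20*B11*C11 - B10*C11*B21*C20 - B20*C21*B11*C10 with hm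
  -- determinant of slice combinations
  have key : ∀ α β : ℂ,
      (α*B10*C10 + β*B20*C20) * (α*B11*C11 + β*B21*C21)
        - (α*B10*C11 + β*B20*C21) * (α*B11*C10 + β*B21*C20) = α*β*m := by
    intro α β; rw [hm]; ring
  have h1 : u1 * u2 * m = -(s*s) := by
    calc u1 * u2 * m = (u1*B10*C10 + u2*B20*C20) * (u1*B11*C11 + u2*B21*C21)
        - (u1*B10*C11 + u2*B20*C21) * (u1*B11*C10 + u2*B21*C20) := (key u1 u2).symm
      _ = -(s*s) := by
        rw [show u1*B10*C10 + u2*B20*C20 = 0 by linear_combination e000,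
          show u1*B11*C11 + u2*B21*C21 = 0 by linear_combination e011,
          show u1*B10*C11 + u2*B20*C21 = s by linear_combination e001,
          show u1*B11*C10 + u2*B21*C20 = s by linear_combination e010]
        ring
  have h2 : v1 * v2 * m = 0 := by
    calc v1 * v2 * m = (v1*B10*C10 + v2*B20*C20) * (v1*B11*C11 + v2*B21*C21)
        - (v1*B10*C11 + v2*B20*C21) * (v1*B11*C10 + v2*B21*C20) := (key v1 v2).symm
      _ = 0 := by
        rw [show v1*B10*C10 + v2*B20*C20 = s by linear_combination e100,
          show v1*B11*C11 + v2*B21*C21 = 0 by linear_combination e111,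
          show v1*B10*C11 + v2*B20*C21 = 0 by linear_combination e101,
          show v1*B11*C10 + v2*B21*C20 = 0 by linear_combination e110]
        ring
  have h3 : (u1+v1) * (u2+v2) * m = -(s*s) := by
    calc (u1+v1) * (u2+v2) * m
        = ((u1+v1)*B10*C10 + (u2+v2)*B20*C20) * ((u1+v1)*B11*C11 + (u2+v2)*B21*C21)
        - ((u1+v1)*B10*C11 + (u2+v2)*B20*C21) * ((u1+v1)*B11*C10 + (u2+v2)*B21*C20) :=
          (key (u1+v1) (u2+v2)).symm
      _ = -(s*s) := by
        rw [show (u1+v1)*B10*C10 + (u2+v2)*B20*C20 = s by linear_combination e000 + e100,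
          show (u1+v1)*B11*C11 + (u2+v2)*B21*C21 = 0 by linear_combination e011 + e111,
          show (u1+v1)*B10*C11 + (u2+v2)*B20*C21 = s by linear_combination e001 + e101,
          show (u1+v1)*B11*C10 + (u2+v2)*B21*C20 = s by linear_combination e010 + e110]
        ring
  -- now the contradiction
  have hss : -(s*s) ≠ 0 := by simpa using hs
  have hmne : m ≠ 0 := fun h0 => hss (by rw [← h1, h0]; ring)
  have hu1 : u1 ≠ 0 := fun hu => hss (by rw [← h1, hu]; ring)
  have hu2 : u2 ≠ 0 := fun hu => hss (by rw [← h1, hu]; ring)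
  have hcross : u1*v2*m + v1*u2*m = 0 := by linear_combination h3 - h1 - h2
  rcases mul_eq_zero.mp
      (by rcases mul_eq_zero.mp h2 with h|h; exact h; exact absurd h hmne : v1 * v2 = 0)
      with hv1 | hv2
  · have hv2 : v2 = 0 := by
      have : u1*v2*m = 0 := by rw [← hcross]; rw [hv1]; ring
      rcases mul_eq_zero.mp this with h|h
      · rcases mul_eq_zero.mp h with h'|h'
        · exact absurd h' hu1
        · exact h'
      · exact absurd h hmne
    rw [hv1, hv2] at e100
    simp at e100
    exact hs e100.symm
  · have hv1 : v1 = 0 := by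
      have : v1*u2*m = 0 := by
        rw [show v1*u2*m = -(u1*v2*m) + (u1*v2*m + v1*u2*m) by ring, hcross, hv2]; ring
      rcases mul_eq_zero.mp this with h|h
      · rcases mul_eq_zero.mp h with h'|h'
        · exact h'
        · exact absurd h' hu2
      · exact absurd h hmne
    rw [hv1, hv2] at e100
    simp at e100
    exact hs e100.symm

/-- The tensor rank of the GHZ state is 2 and the tensor rank of the W state is 3. -/
theorem tensorRank_GHZ_and_W : tensorRank3 GHZ3 = 2 ∧ tensorRank3 W3 = 3 := by
  constructor
  · have h2mem : 2 ∈ {r : ℕ | ∃ a b c : Fin r → Fin 2 → ℂ,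
        GHZ3 = fun f => ∑ i, a i (f 0) * b i (f 1) * c i (f 2)} := ghz_mem2
    refine le_antisymm (Nat.sInf_le h2mem) (le_csInf ⟨2, h2mem⟩ ?_)
    intro r hr
    by_contra hlt
    push_neg at hlt
    interval_cases r
    · obtain ⟨a, b, c, h⟩ := hr; exact (ghz_not0 a b c h).elim
    · obtain ⟨a, b, c, h⟩ := hr; exact (ghz_not1 a b c h).elim
  · have h3mem : 3 ∈ {r : ℕ | ∃ a b c : Fin r → Fin 2 → ℂ,
        W3 = fun f => ∑ i, a i (f 0) * b i (f 1) * c i (f 2)} := w_mem3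
    refine le_antisymm (Nat.sInf_le h3mem) (le_csInf ⟨3, h3mem⟩ ?_)
    intro r hr
    by_contra hlt
    push_neg at hlt
    interval_cases r
    · obtain ⟨a, b, c, h⟩ := hr; exact (w_not0 a b c h).elim
    · obtain ⟨a, b, c, h⟩ := hr; exact (w_not1 a b c h).elim
    · obtain ⟨a, b, c, h⟩ := hr; exact (w_not2 a b c h).elim
end

section
/- Suppose |Ψ⟩ ∈ (ℂ²)^{⊗n} and g, h are local invertible operators with G = g†g, H = h†h. If there exist probabilities p_k ≥ 0 with Σ p_k = 1, local symmetries S_k ∈ S(Ψ) (i.e., S_k|Ψ⟩ = |Ψ⟩), and r = ‖h|Ψ⟩‖²/‖g|Ψ⟩‖² such that Σ_k p_k S_k† H S_k = r G, then the operators M_k = (√p_k/√r) h S_k g^{-1} form a valid POVM (Σ_k M_k† M_k = 1) and each M_k maps g|Ψ⟩/‖g|Ψ⟩‖ to a state proportional to h|Ψ⟩/‖h|Ψ⟩‖. -/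
open Matrix

/-- Squared norm `‖v‖²` of an `n`-qubit vector. -/
def nsq {n : ℕ} (v : (Fin n → Fin 2) → ℂ) : ℝ := ∑ f, Complex.normSq (v f)

/-! Conjugating `Σ p_k S_k† H S_k = r G` by `g⁻¹` turns it into `Σ M_k† M_k = 1`; here `r > 0`
because `g` and `h` are invertible and `Ψ ≠ 0`. Since `S_k Ψ = Ψ`, each `M_k` sends `g Ψ` to
`(√p_k/√r) h Ψ`. -/

lemma localMat_mul {n : ℕ} (M N : Fin n → Matrix (Fin 2) (Fin 2) ℂ) :
    localMat M * localMat N = localMat (fun i => M i * N i) := by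
  ext f g
  simp only [localMat, mul_apply, of_apply]
  rw [Finset.prod_univ_sum, Fintype.piFinset_univ]
  simp [Finset.prod_mul_distrib]

lemma localMat_one {n : ℕ} : localMat (fun _ : Fin n => (1 : Matrix (Fin 2) (Fin 2) ℂ)) = 1 := by
  ext f g
  simp only [localMat, of_apply, one_apply]
  split_ifs with h
  · simp [h]
  · obtain ⟨i, hi⟩ := Function.ne_iff.mp h
    exact Finset.prod_eq_zero (Finset.mem_univ i) (by simp [hi])

lemma isUnit_localMat {n : ℕ} {M : Fin n → Matrix (Fin 2) (Fin 2) ℂ} (hM : ∀ i, IsUnit (M i)) :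
    IsUnit (localMat M) := by
  have hinv : localMat M * localMat (fun i => (M i)⁻¹) = 1 := by
    rw [localMat_mul, ← localMat_one]
    congr 1
    funext i
    exact mul_nonsing_inv _ ((isUnit_iff_isUnit_det _).mp (hM i))
  exact (isUnit_iff_isUnit_det _).mpr (isUnit_det_of_right_inverse hinv)

lemma nsq_pos {n : ℕ} {v : (Fin n → Fin 2) → ℂ} (hv : v ≠ 0) : 0 < nsq v := by
  obtain ⟨f, hf⟩ := Function.ne_iff.mp hv
  exact Finset.sum_pos' (fun _ _ => Complex.normSq_nonneg _)
    ⟨f, Finset.mem_univ f, Complex.normSq_pos.mpr hf⟩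

lemma mulVec_ne_zero_of_isUnit {ι K : Type*} [Fintype ι] [DecidableEq ι] [Field K]
    {A : Matrix ι ι K} (hA : IsUnit A) {v : ι → K} (hv : v ≠ 0) : A *ᵥ v ≠ 0 := by
  simpa using (mulVec_injective_iff_isUnit.mpr hA).ne hv

section

variable {ι κ : Type*} [Fintype ι] [DecidableEq ι] [Fintype κ]

lemma conjTranspose_nonsing_inv_mul_mul_nonsing_inv {A : Matrix ι ι ℂ} (hA : IsUnit A) :
    (A⁻¹)ᴴ * (Aᴴ * A) * A⁻¹ = 1 := by
  have h : A * A⁻¹ = 1 := mul_nonsing_inv _ ((isUnit_iff_isUnit_det _).mp hA)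
  calc (A⁻¹)ᴴ * (Aᴴ * A) * A⁻¹ = (A * A⁻¹)ᴴ * (A * A⁻¹) := by
        simp only [conjTranspose_mul, Matrix.mul_assoc]
    _ = 1 := by rw [h, conjTranspose_one, Matrix.one_mul]

lemma conjTranspose_ofReal_smul_mul_self (c : ℝ) (X : Matrix ι ι ℂ) :
    ((c : ℂ) • X)ᴴ * ((c : ℂ) • X) = ((c * c : ℝ) : ℂ) • (Xᴴ * X) := by
  rw [conjTranspose_smul, Complex.star_def, Complex.conj_ofReal, smul_mul_smul_comm,
    Complex.ofReal_mul]

theorem sum_conjTranspose_mul_self_eq_one {A : Matrix ι ι ℂ} (hA : IsUnit A)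
    (B : κ → Matrix ι ι ℂ) {p : κ → ℝ} (hp : ∀ k, 0 ≤ p k) {r : ℝ} (hr : 0 < r)
    (h : ∑ k, (p k : ℂ) • ((B k)ᴴ * B k) = (r : ℂ) • (Aᴴ * A)) :
    ∑ k, (((√(p k) / √r : ℝ) : ℂ) • (B k * A⁻¹))ᴴ * (((√(p k) / √r : ℝ) : ℂ) • (B k * A⁻¹))
      = 1 := by
  have hterm : ∀ k,
      (((√(p k) / √r : ℝ) : ℂ) • (B k * A⁻¹))ᴴ * (((√(p k) / √r : ℝ) : ℂ) • (B k * A⁻¹)) =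
        (A⁻¹)ᴴ * ((r : ℂ)⁻¹ • (p k : ℂ) • ((B k)ᴴ * B k)) * A⁻¹ := fun k => by
    rw [conjTranspose_ofReal_smul_mul_self, div_mul_div_comm, Real.mul_self_sqrt (hp k),
      Real.mul_self_sqrt hr.le]
    push_cast
    rw [div_eq_inv_mul, ← smul_smul]
    simp only [conjTranspose_mul, Matrix.mul_smul, Matrix.smul_mul, Matrix.mul_assoc]
  simp_rw [hterm, ← Matrix.sum_mul, ← Matrix.mul_sum, ← Finset.smul_sum, h,
    smul_smul, inv_mul_cancel₀ (Complex.ofReal_ne_zero.mpr hr.ne'), one_smul]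
  exact conjTranspose_nonsing_inv_mul_mul_nonsing_inv hA

lemma mul_mul_nonsing_inv_mulVec_mulVec (B : Matrix ι ι ℂ) {S A : Matrix ι ι ℂ}
    (hA : IsUnit A) {v : ι → ℂ} (hS : S *ᵥ v = v) : (B * S * A⁻¹) *ᵥ (A *ᵥ v) = B *ᵥ v := by
  rw [mulVec_mulVec, Matrix.mul_assoc, nonsing_inv_mul _ ((isUnit_iff_isUnit_det _).mp hA),
    Matrix.mul_one, ← mulVec_mulVec, hS]

end

theorem sep_conversion_povm_general (n m : ℕ) (Ψ : (Fin n → Fin 2) → ℂ) (hΨ : Ψ ≠ 0)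
    (gf hf : Fin n → Matrix (Fin 2) (Fin 2) ℂ)
    (hgu : ∀ i, IsUnit (gf i)) (hhu : ∀ i, IsUnit (hf i))
    (Sf : Fin m → Fin n → Matrix (Fin 2) (Fin 2) ℂ)
    (hSsym : ∀ k, localMat (Sf k) *ᵥ Ψ = Ψ)
    (p : Fin m → ℝ) (hp0 : ∀ k, 0 ≤ p k)
    (r : ℝ) (hr : r = nsq (localMat hf *ᵥ Ψ) / nsq (localMat gf *ᵥ Ψ))
    (hsep : ∑ k, (p k : ℂ) •
        ((localMat (Sf k))ᴴ * ((localMat hf)ᴴ * localMat hf) * localMat (Sf k))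
      = (r : ℂ) • ((localMat gf)ᴴ * localMat gf))
    (M : Fin m → Matrix (Fin n → Fin 2) (Fin n → Fin 2) ℂ)
    (hM : ∀ k, M k = ((Real.sqrt (p k) / Real.sqrt r : ℝ) : ℂ) •
        (localMat hf * localMat (Sf k) * (localMat gf)⁻¹)) :
    (∑ k, (M k)ᴴ * M k = 1) ∧
    ∀ k, ∃ c : ℂ,
      M k *ᵥ (((Real.sqrt (nsq (localMat gf *ᵥ Ψ)))⁻¹ : ℝ) • (localMat gf *ᵥ Ψ))
        = c • (((Real.sqrt (nsq (localMat hf *ᵥ Ψ)))⁻¹ : ℝ) • (localMat hf *ᵥ Ψ)) := by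
  have hg : IsUnit (localMat gf) := isUnit_localMat hgu
  have hhΨ : 0 < nsq (localMat hf *ᵥ Ψ) :=
    nsq_pos (mulVec_ne_zero_of_isUnit (isUnit_localMat hhu) hΨ)
  have hgΨ : 0 < nsq (localMat gf *ᵥ Ψ) := nsq_pos (mulVec_ne_zero_of_isUnit hg hΨ)
  refine ⟨?_, fun k => ?_⟩
  · simp_rw [hM]
    refine sum_conjTranspose_mul_self_eq_one hg _ hp0 (hr ▸ div_pos hhΨ hgΨ) ?_
    simpa only [conjTranspose_mul, Matrix.mul_assoc] using hsep
  · set a := (Real.sqrt (nsq (localMat gf *ᵥ Ψ)))⁻¹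
    set b := (Real.sqrt (nsq (localMat hf *ᵥ Ψ)))⁻¹
    have hb : (b : ℂ) ≠ 0 :=
      Complex.ofReal_ne_zero.mpr (inv_ne_zero (Real.sqrt_pos.mpr hhΨ).ne')
    refine ⟨((Real.sqrt (p k) / Real.sqrt r : ℝ) : ℂ) * a / b, ?_⟩
    rw [hM k, smul_mulVec, mulVec_smul, mul_mul_nonsing_inv_mulVec_mulVec _ hg (hSsym k)]
    ext f
    simp only [Pi.smul_apply, Complex.real_smul, smul_eq_mul]
    field_simp

/-- Gour–Wallach SEP conversion: if there are probabilities `p_k` and local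
symmetries `S_k` of `|Ψ⟩` with `Σ p_k S_k† H S_k = r G` where `H = h†h`,
`G = g†g` and `r = ‖h|Ψ⟩‖²/‖g|Ψ⟩‖²`, then the operators
`M_k = (√p_k/√r) h S_k g⁻¹` form a POVM (`Σ M_k† M_k = 1`) and each `M_k` maps
the normalized state `g|Ψ⟩/‖g|Ψ⟩‖` to a multiple of `h|Ψ⟩/‖h|Ψ⟩‖`. -/
theorem sep_conversion_povm (n m : ℕ) (Ψ : (Fin n → Fin 2) → ℂ) (hΨ : Ψ ≠ 0)
    (gf hf : Fin n → Matrix (Fin 2) (Fin 2) ℂ)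
    (hgu : ∀ i, IsUnit (gf i)) (hhu : ∀ i, IsUnit (hf i))
    (Sf : Fin m → Fin n → Matrix (Fin 2) (Fin 2) ℂ)
    (hSu : ∀ k i, IsUnit (Sf k i))
    (hSsym : ∀ k, localMat (Sf k) *ᵥ Ψ = Ψ)
    (p : Fin m → ℝ) (hp0 : ∀ k, 0 ≤ p k) (hp1 : ∑ k, p k = 1)
    (r : ℝ) (hr : r = nsq (localMat hf *ᵥ Ψ) / nsq (localMat gf *ᵥ Ψ))
    (hsep : ∑ k, (p k : ℂ) •
        ((localMat (Sf k))ᴴ * ((localMat hf)ᴴ * localMat hf) * localMat (Sf k))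
      = (r : ℂ) • ((localMat gf)ᴴ * localMat gf))
    (M : Fin m → Matrix (Fin n → Fin 2) (Fin n → Fin 2) ℂ)
    (hM : ∀ k, M k = ((Real.sqrt (p k) / Real.sqrt r : ℝ) : ℂ) •
        (localMat hf * localMat (Sf k) * (localMat gf)⁻¹)) :
    (∑ k, (M k)ᴴ * M k = 1) ∧
    ∀ k, ∃ c : ℂ,
      M k *ᵥ (((Real.sqrt (nsq (localMat gf *ᵥ Ψ)))⁻¹ : ℝ) • (localMat gf *ᵥ Ψ))
        = c • (((Real.sqrt (nsq (localMat hf *ᵥ Ψ)))⁻¹ : ℝ) • (localMat hf *ᵥ Ψ)) :=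
  sep_conversion_povm_general n m Ψ hΨ gf hf hgu hhu Sf hSsym p hp0 r hr hsep M hM
end

section
/- If the only local symmetry of a state |Ψ⟩ ∈ (ℂ²)^{⊗n} is the identity (S(Ψ) = {1}), then the SEP conversion condition Σ_k p_k S_k† H S_k = rG forces H = rG; hence h|Ψ⟩ and g|Ψ⟩ are related by local unitaries, i.e., a state in a SLOCC class whose representative has trivial symmetry group is isolated under deterministic SEP transformations. -/
open Matrix

lemma localMat_conjT {n : ℕ} (M : Fin n → Matrix (Fin 2) (Fin 2) ℂ) :
    (localMat M)ᴴ = localMat (fun i => (M i)ᴴ) := by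
  ext f g
  simp [localMat, Matrix.conjTranspose_apply, map_prod]

lemma localMat_smul {n : ℕ} (s : Fin n → ℂ) (M : Fin n → Matrix (Fin 2) (Fin 2) ℂ) :
    localMat (fun i => s i • M i) = (∏ i, s i) • localMat M := by
  ext f g
  simp [localMat, Finset.prod_mul_distrib]

/-- If the only local symmetry of `|Ψ⟩` is the identity, then the SEP conversion
condition `Σ p_k S_k† H S_k = r G` forces `H = r G`, and hence `h|Ψ⟩` and `g|Ψ⟩`
are related by a local unitary: such a state is isolated under deterministic SEP. -/
theorem isolated_of_trivial_symmetry (n m : ℕ) (Ψ : (Fin n → Fin 2) → ℂ)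
    (htriv : ∀ S : Fin n → Matrix (Fin 2) (Fin 2) ℂ,
      (∀ i, IsUnit (S i)) → localMat S *ᵥ Ψ = Ψ → localMat S = 1)
    (gf hf : Fin n → Matrix (Fin 2) (Fin 2) ℂ)
    (hgu : ∀ i, IsUnit (gf i)) (hhu : ∀ i, IsUnit (hf i))
    (Sf : Fin m → Fin n → Matrix (Fin 2) (Fin 2) ℂ)
    (hSu : ∀ k i, IsUnit (Sf k i))
    (hSsym : ∀ k, localMat (Sf k) *ᵥ Ψ = Ψ)
    (p : Fin m → ℝ) (hp0 : ∀ k, 0 ≤ p k) (hp1 : ∑ k, p k = 1)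
    (r : ℝ) (hr : 0 < r)
    (hsep : ∑ k, (p k : ℂ) •
        ((localMat (Sf k))ᴴ * ((localMat hf)ᴴ * localMat hf) * localMat (Sf k))
      = (r : ℂ) • ((localMat gf)ᴴ * localMat gf)) :
    ((localMat hf)ᴴ * localMat hf = (r : ℂ) • ((localMat gf)ᴴ * localMat gf)) ∧
    ∃ U : Fin n → Matrix (Fin 2) (Fin 2) ℂ,
      (∀ i, U i ∈ Matrix.unitaryGroup (Fin 2) ℂ) ∧
      localMat hf *ᵥ Ψ = ((Real.sqrt r : ℝ) : ℂ) • (localMat U *ᵥ (localMat gf *ᵥ Ψ)) := by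
  -- Step 1: each S_k is the identity, so H = r G
  have hS1 : ∀ k, localMat (Sf k) = 1 := fun k => htriv (Sf k) (hSu k) (hSsym k)
  have hHG : (localMat hf)ᴴ * localMat hf = (r : ℂ) • ((localMat gf)ᴴ * localMat gf) := by
    have := hsep
    simp only [hS1, Matrix.conjTranspose_one, Matrix.one_mul, Matrix.mul_one] at this
    rw [← Finset.sum_smul] at this
    have hps : (∑ k, (p k : ℂ)) = 1 := by
      rw [← Complex.ofReal_sum, hp1, Complex.ofReal_one]
    rwa [hps, one_smul] at this
  refine ⟨hHG, ?_⟩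
  -- Step 2: polar decomposition locally
  set A : Fin n → Matrix (Fin 2) (Fin 2) ℂ := fun i => hf i * (gf i)⁻¹ with hA
  have hgdet : ∀ i, IsUnit (gf i).det := fun i => (Matrix.isUnit_iff_isUnit_det _).mp (hgu i)
  have hAg : (fun i => A i * gf i) = hf := by
    funext i
    rw [hA]; simp only
    rw [mul_assoc, Matrix.nonsing_inv_mul _ (hgdet i), mul_one]
  have hfact : localMat hf = localMat A * localMat gf := by rw [localMat_mul, hAg]
  set Gi : Matrix (Fin n → Fin 2) (Fin n → Fin 2) ℂ := localMat (fun i => (gf i)⁻¹) with hGi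
  have hgGi : localMat gf * Gi = 1 := by
    rw [hGi, localMat_mul]
    rw [show (fun i => gf i * (gf i)⁻¹) = fun _ : Fin n => (1 : Matrix (Fin 2) (Fin 2) ℂ) from
      funext fun i => Matrix.mul_nonsing_inv _ (hgdet i)]
    exact localMat_one
  have hLA : localMat A = localMat hf * Gi := by
    rw [hGi, localMat_mul, hA]
  set P : Fin n → Matrix (Fin 2) (Fin 2) ℂ := fun i => (A i)ᴴ * A i with hPdef
  have hP : localMat P = (r : ℂ) • 1 := by
    have h1 : localMat P = (localMat A)ᴴ * localMat A := by
      rw [localMat_conjT, localMat_mul]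
    rw [h1, hLA, Matrix.conjTranspose_mul]
    calc Giᴴ * (localMat hf)ᴴ * (localMat hf * Gi)
        = Giᴴ * ((localMat hf)ᴴ * localMat hf) * Gi := by simp only [mul_assoc]
      _ = Giᴴ * ((r : ℂ) • ((localMat gf)ᴴ * localMat gf)) * Gi := by rw [hHG]
      _ = (r : ℂ) • ((localMat gf * Gi)ᴴ * (localMat gf * Gi)) := by
          rw [Matrix.conjTranspose_mul, Matrix.mul_smul, Matrix.smul_mul]
          congr 1
          simp only [mul_assoc]
      _ = (r : ℂ) • 1 := by rw [hgGi]; simp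
  -- diagonal products equal r
  have hrC : (r : ℂ) ≠ 0 := by exact_mod_cast hr.ne'
  have hdiag : ∀ f : Fin n → Fin 2, ∏ i, P i (f i) (f i) = (r : ℂ) := by
    intro f
    have h2 : localMat P f f = (r : ℂ) := by
      rw [hP]; simp [Matrix.smul_apply, Matrix.one_apply_eq]
    simpa [localMat] using h2
  have hdne : ∀ (f : Fin n → Fin 2) (i : Fin n), P i (f i) (f i) ≠ 0 := by
    intro f i
    have h := hdiag f
    have : ∏ i, P i (f i) (f i) ≠ 0 := h ▸ hrC
    exact Finset.prod_ne_zero_iff.mp this i (Finset.mem_univ i)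
  -- off-diagonal entries vanish
  have hoff : ∀ (i : Fin n) (a b : Fin 2), a ≠ b → P i a b = 0 := by
    intro i a b hab
    set f : Fin n → Fin 2 := Function.update (fun _ => 0) i a with hfd
    set g : Fin n → Fin 2 := Function.update (fun _ => 0) i b with hgd
    have hfg : f ≠ g := by
      intro h
      have := congrFun h i
      simp [hfd, hgd] at this
      exact hab this
    have h0 : ∏ j, P j (f j) (g j) = 0 := by
      have : localMat P f g = 0 := by
        rw [hP]; simp [Matrix.smul_apply, Matrix.one_apply_ne hfg]
      simpa [localMat] using this
    obtain ⟨j, _, hj⟩ := Finset.prod_eq_zero_iff.mp h0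
    by_cases hji : j = i
    · subst hji; simpa [hfd, hgd] using hj
    · exfalso
      have hfj : f j = g j := by simp [hfd, hgd, Function.update_of_ne hji]
      rw [hfj] at hj
      exact hdne g j hj
  -- diagonal entries equal
  have hdd : ∀ i : Fin n, P i 0 0 = P i 1 1 := by
    intro i
    have h0 := hdiag (fun _ => 0)
    have h1 := hdiag (Function.update (fun _ => (0 : Fin 2)) i 1)
    have heq : ∀ j : Fin n, P j (Function.update (fun _ => (0:Fin 2)) i 1 j)
        (Function.update (fun _ => (0:Fin 2)) i 1 j)
        = Function.update (fun j => P j 0 0) i (P i 1 1) j := by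
      intro j
      by_cases hji : j = i
      · subst hji; simp
      · simp [Function.update_of_ne hji]
    rw [Finset.prod_congr rfl (fun j _ => heq j),
      Finset.prod_update_of_mem (Finset.mem_univ i)] at h1
    rw [Finset.prod_eq_mul_prod_sdiff_singleton_of_mem (Finset.mem_univ i) (fun j => P j 0 0)] at h0
    have hrest : ∏ j ∈ Finset.univ \ {i}, P j 0 0 ≠ 0 :=
      Finset.prod_ne_zero_iff.mpr fun j _ => hdne (fun _ => 0) j
    exact mul_right_cancel₀ hrest (h0.trans h1.symm)
  -- the positive scalars
  set c : Fin n → ℝ := fun i => ∑ k, Complex.normSq (A i k 0) with hc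
  have hcP : ∀ i, (c i : ℂ) = P i 0 0 := by
    intro i
    rw [hPdef]; simp only [Matrix.mul_apply, Matrix.conjTranspose_apply]
    push_cast [hc, Complex.normSq_eq_conj_mul_self]
    rfl
  have hc0 : ∀ i, 0 < c i := by
    intro i
    have hne : (c i : ℂ) ≠ 0 := by rw [hcP]; exact hdne (fun _ => 0) i
    have : c i ≠ 0 := by exact_mod_cast hne
    have hnn : 0 ≤ c i := Finset.sum_nonneg fun k _ => Complex.normSq_nonneg _
    exact lt_of_le_of_ne hnn (Ne.symm this)
  have hPc : ∀ i, P i = (c i : ℂ) • 1 := by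
    intro i
    have hd : ∀ a : Fin 2, P i a a = (c i : ℂ) := by
      intro a
      fin_cases a
      · exact (hcP i).symm
      · rw [show ((⟨1, by omega⟩ : Fin 2)) = (1 : Fin 2) from rfl, ← hdd i]
        exact (hcP i).symm
    ext a b
    by_cases hab : a = b
    · subst hab; rw [hd a]; simp [Matrix.smul_apply, Matrix.one_apply_eq]
    · rw [hoff i a b hab]; simp [Matrix.smul_apply, Matrix.one_apply_ne hab]
  have hprod : ∏ i, c i = r := by
    have := hdiag (fun _ => 0)
    have h2 : ((∏ i, c i : ℝ) : ℂ) = (r : ℂ) := by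
      push_cast
      rw [Finset.prod_congr rfl (fun i _ => hcP i)]
      exact this
    exact_mod_cast h2
  -- define the unitaries
  set U : Fin n → Matrix (Fin 2) (Fin 2) ℂ :=
    fun i => ((Real.sqrt (c i) : ℝ) : ℂ)⁻¹ • A i with hU
  have hsc : ∀ i, ((Real.sqrt (c i) : ℝ) : ℂ) ≠ 0 := by
    intro i
    exact_mod_cast (Real.sqrt_pos.mpr (hc0 i)).ne'
  have hAU : (fun i => ((Real.sqrt (c i) : ℝ) : ℂ) • U i) = A := by
    funext i
    rw [hU]; simp only
    rw [smul_smul, mul_inv_cancel₀ (hsc i), one_smul]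
  have hUunit : ∀ i, U i ∈ Matrix.unitaryGroup (Fin 2) ℂ := by
    intro i
    rw [Matrix.mem_unitaryGroup_iff']
    have hstar : star (U i) = ((Real.sqrt (c i) : ℝ) : ℂ)⁻¹ • star (A i) := by
      rw [hU]; simp only [star_smul]
      congr 1
      simp [Complex.star_def, Complex.conj_ofReal]
    rw [hstar, hU]
    simp only [Matrix.smul_mul, Matrix.mul_smul, smul_smul]
    have hAA : star (A i) * A i = (c i : ℂ) • 1 := by
      rw [← hPc i, hPdef]; rfl
    rw [hAA, smul_smul]
    have h2 : ((Real.sqrt (c i) : ℝ) : ℂ)⁻¹ * ((Real.sqrt (c i) : ℝ) : ℂ)⁻¹ * (c i : ℂ) = 1 := by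
      rw [← mul_inv, ← Complex.ofReal_mul, Real.mul_self_sqrt (hc0 i).le]
      exact inv_mul_cancel₀ (by exact_mod_cast (hc0 i).ne')
    rw [h2, one_smul]
  refine ⟨U, hUunit, ?_⟩
  -- final computation
  have hsqrtprod : ∏ i, Real.sqrt (c i) = Real.sqrt r := by
    have h1 : (∏ i, Real.sqrt (c i)) ^ 2 = ∏ i, c i := by
      rw [← Finset.prod_pow]
      exact Finset.prod_congr rfl fun i _ => Real.sq_sqrt (hc0 i).le
    have h2 : 0 ≤ ∏ i, Real.sqrt (c i) :=
      Finset.prod_nonneg fun i _ => Real.sqrt_nonneg _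
    rw [← hprod, ← h1, Real.sqrt_sq h2]
  have hLAU : localMat A = ((Real.sqrt r : ℝ) : ℂ) • localMat U := by
    rw [← hAU, localMat_smul]
    congr 1
    push_cast [← hsqrtprod]
    rfl
  rw [hfact, ← Matrix.mulVec_mulVec, hLAU, Matrix.smul_mulVec]
end
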